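/- Dixon's identity: for all natural numbers a, b, n, the sum over integers k from -n to n of (-1)^k * binomial(a+b, a+k) * binomial(a+n, n+k) * binomial(b+n, b+k) equals (a+b+n)! / (a! * b! * n!). -/

import Mathlib

/-- Binomial coefficient `choose m j` for an integer lower index, zero when `j < 0`. -/
def ibin (m : ℕ) (j : ℤ) : ℚ := if 0 ≤ j then (m.choose j.toNat : ℚ) else 0

lemma ibin_neg {m : ℕ} {j : ℤ} (h : j < 0) : ibin m j = 0 := if_neg (not_le.2 h)

lemma ibin_big {m : ℕ} {j : ℤ} (h : (m : ℤ) < j) : ibin m j = 0 := by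
  have h0 : 0 ≤ j := le_of_lt (lt_of_le_of_lt (Int.ofNat_nonneg m) h)
  rw [ibin, if_pos h0, Nat.choose_eq_zero_of_lt (by omega)]
  norm_num

lemma ibin_absorb (m : ℕ) (j : ℤ) :
    ((j : ℚ) + 1) * ibin m (j + 1) = ((m : ℚ) - (j : ℚ)) * ibin m j := by
  rcases lt_trichotomy j (-1) with h | h | h
  · rw [ibin_neg (by omega), ibin_neg (by omega)]; ring
  · subst h
    rw [ibin_neg (show (-1:ℤ) < 0 by norm_num)]
    push_cast; ring
  · have h0 : 0 ≤ j := by omega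
    rcases le_or_gt ((m : ℤ)) j with hm | hm
    · rcases eq_or_lt_of_le hm with he | hlt
      · -- j = m
        rw [ibin_big (by omega)]
        rw [ibin, if_pos h0]
        have : j.toNat = m := by omega
        rw [this, ← he]; push_cast; ring
      · rw [ibin_big (by omega), ibin_big (by omega)]; ring
    · have hle : j.toNat ≤ m := by omega
      have key := Nat.choose_succ_right_eq m j.toNat
      have keyQ : ((m.choose (j.toNat + 1)) : ℚ) * ((j.toNat : ℚ) + 1)
          = (m.choose j.toNat : ℚ) * ((m : ℚ) - (j.toNat : ℚ)) := by
        exact_mod_cast congrArg (Nat.cast : ℕ → ℚ) key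
      have hjq : ((j.toNat : ℕ) : ℚ) = (j : ℚ) := by
        exact_mod_cast congrArg (Int.cast : ℤ → ℚ) (Int.toNat_of_nonneg h0)
      rw [ibin, if_pos (by omega), ibin, if_pos h0]
      have h1 : (j + 1).toNat = j.toNat + 1 := by omega
      rw [h1]
      rw [hjq] at keyQ
      linarith [keyQ]

lemma ibin_pascal (m : ℕ) (j : ℤ) : ibin (m + 1) (j + 1) = ibin m j + ibin m (j + 1) := by
  rcases lt_trichotomy j (-1) with h | h | h
  · rw [ibin_neg (by omega), ibin_neg (by omega), ibin_neg (by omega)]; ring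
  · subst h
    rw [ibin_neg (show (-1:ℤ) < 0 by norm_num)]
    norm_num [ibin]
  · have h0 : 0 ≤ j := by omega
    rw [ibin, if_pos (by omega), ibin, if_pos h0, ibin, if_pos (by omega)]
    have h1 : (j + 1).toNat = j.toNat + 1 := by omega
    rw [h1, Nat.choose_succ_succ]
    push_cast; ring

def dterm (a b n : ℕ) (k : ℤ) : ℚ :=
  (-1 : ℚ) ^ k * ibin (a + b) ((a : ℤ) + k) * ibin (a + n) ((n : ℤ) + k)
    * ibin (b + n) ((b : ℤ) + k)

def gcert (a b n : ℕ) (k : ℤ) : ℚ :=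
  -(1/2) * ((a : ℚ) + (k : ℚ)) * (-1 : ℚ) ^ k * ibin (a + b) ((a : ℤ) + k)
    * ibin (a + n) ((n : ℤ) + k) * ibin (b + n) ((b : ℤ) + k - 1)

lemma dixon_step (a b n : ℕ) (k : ℤ) :
    ((n : ℚ) + 1) * dterm a b (n+1) k - ((a : ℚ) + b + n + 1) * dterm a b n k
      = gcert a b n (k+1) - gcert a b n k := by
  unfold dterm gcert
  -- normalize integer indices
  rw [show ((a : ℤ) + (k+1)) = (a : ℤ) + k + 1 from by ring,
      show ((n : ℤ) + (k+1)) = (n : ℤ) + k + 1 from by ring,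
      show ((b : ℤ) + (k+1) - 1) = (b : ℤ) + k from by ring,
      show (((n+1 : ℕ) : ℤ) + k) = (n : ℤ) + k + 1 from by push_cast; ring,
      zpow_add_one₀ (by norm_num : (-1:ℚ) ≠ 0)]
  have hP1 : ibin (a+(n+1)) ((n : ℤ) + k + 1)
      = ibin (a+n) ((n:ℤ)+k) + ibin (a+n) ((n:ℤ)+k+1) := ibin_pascal (a+n) ((n:ℤ)+k)
  have hP2 : ibin (b+(n+1)) ((b : ℤ) + k)
      = ibin (b+n) ((b:ℤ)+k-1) + ibin (b+n) ((b:ℤ)+k) := by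
    have h := ibin_pascal (b+n) ((b:ℤ)+k-1)
    rw [show ((b:ℤ)+k-1)+1 = (b:ℤ)+k from by ring] at h
    exact h
  rw [hP1, hP2]
  push_cast
  -- relations
  have hA := ibin_absorb (a+b) ((a:ℤ)+k)
  have hB := ibin_absorb (a+n) ((n:ℤ)+k)
  have hC := ibin_absorb (b+n) ((b:ℤ)+k-1)
  rw [show ((b:ℤ)+k-1)+1 = (b:ℤ)+k from by ring] at hC
  push_cast at hA hB hC
  generalize hs : ((-1:ℚ)) ^ k = s
  by_cases hk1 : k = (n : ℤ) + 1
  · subst hk1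
    have hC0 : ibin (b+n) ((b:ℤ)+((n:ℤ)+1)) = 0 := ibin_big (by push_cast; omega)
    have hC'1 : ibin (b+n) ((b:ℤ)+((n:ℤ)+1)-1) = ((b+n).choose (b+n) : ℚ) := by
      rw [show ((b:ℤ)+((n:ℤ)+1)-1) = ((b+n : ℕ) : ℤ) from by push_cast; ring]
      rw [ibin, if_pos (by positivity), Int.toNat_natCast]
    rw [hC0, hC'1, Nat.choose_self] at *
    push_cast at *
    linear_combination ((1/2) * s * ibin (a+b) ((a:ℤ)+((n:ℤ)+1))) * hB
  by_cases hk2 : k = -((n : ℤ) + 1)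
  · subst hk2
    have hB0 : ibin (a+n) ((n:ℤ)+(-((n:ℤ)+1))) = 0 := ibin_neg (by omega)
    have hB'1 : ibin (a+n) ((n:ℤ)+(-((n:ℤ)+1))+1) = 1 := by
      rw [show ((n:ℤ)+(-((n:ℤ)+1))+1) = ((0:ℕ) : ℤ) from by push_cast; ring]
      rw [ibin, if_pos (by norm_num), Int.toNat_natCast, Nat.choose_zero_right]
      norm_num
    rw [hB0, hB'1] at *
    push_cast at *
    linear_combination (-(1/2) * s * ibin (b+n) ((b:ℤ)+(-((n:ℤ)+1)))) * hA
      + (-(1/2) * s * ibin (a+b) ((a:ℤ)+(-((n:ℤ)+1)))) * hC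
  -- generic case
  have d1 : ((n : ℚ) + (k : ℚ) + 1) ≠ 0 := by
    have : ((n : ℤ) + k + 1) ≠ 0 := by omega
    exact_mod_cast fun h => this (by exact_mod_cast h)
  have d2 : ((n : ℚ) + 1 - (k : ℚ)) ≠ 0 := by
    have : ((n : ℤ) + 1 - k) ≠ 0 := by omega
    exact_mod_cast fun h => this (by exact_mod_cast h)
  have hB' : ibin (a+n) ((n:ℤ)+k+1)
      = ((a:ℚ) - (k:ℚ)) * ibin (a+n) ((n:ℤ)+k) / ((n:ℚ) + (k:ℚ) + 1) := by
    rw [eq_div_iff d1]; linear_combination hB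
  have hC' : ibin (b+n) ((b:ℤ)+k-1)
      = ((b:ℚ) + (k:ℚ)) * ibin (b+n) ((b:ℤ)+k) / ((n:ℚ) + 1 - (k:ℚ)) := by
    rw [eq_div_iff d2]; linear_combination -hC
  by_cases ha : (a : ℤ) + k + 1 = 0
  · have hA0 : ibin (a+b) ((a:ℤ)+k) = 0 := ibin_neg (by omega)
    have haq : (a:ℚ) + (k:ℚ) + 1 = 0 := by exact_mod_cast congrArg (Int.cast : ℤ → ℚ) ha
    rw [hA0, hB', hC']
    field_simp
    linear_combination (s * ibin (a+b) ((a:ℤ)+k+1) * ibin (a+n) ((n:ℤ)+k)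
      * ibin (b+n) ((b:ℤ)+k) * ((k:ℚ)-(a:ℚ)) * ((n:ℚ)+1-(k:ℚ))) * haq
  · have haq : ((a:ℚ) + (k:ℚ) + 1) ≠ 0 := by
      exact_mod_cast fun h => ha (by exact_mod_cast h)
    have hA' : ibin (a+b) ((a:ℤ)+k+1)
        = ((b:ℚ) - (k:ℚ)) * ibin (a+b) ((a:ℤ)+k) / ((a:ℚ) + (k:ℚ) + 1) := by
      rw [eq_div_iff haq]; linear_combination hA
    rw [hA', hB', hC']
    field_simp
    ring

lemma dterm_zero {a b n : ℕ} {k : ℤ} (h : k < -(n:ℤ) ∨ (n:ℤ) < k) : dterm a b n k = 0 := by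
  rcases h with h | h
  · rw [dterm, ibin_neg (show (n:ℤ) + k < 0 by omega)]; ring
  · rw [dterm, ibin_big (show ((b+n : ℕ) : ℤ) < (b:ℤ) + k by push_cast; omega)]; ring

lemma sum_ext (a b n m : ℕ) (h : n ≤ m) :
    ∑ k ∈ Finset.Icc (-(m:ℤ)) (m:ℤ), dterm a b n k
      = ∑ k ∈ Finset.Icc (-(n:ℤ)) (n:ℤ), dterm a b n k := by
  refine (Finset.sum_subset (Finset.Icc_subset_Icc (by exact_mod_cast neg_le_neg (by exact_mod_cast h)) (by exact_mod_cast h)) ?_).symm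
  intro x hx hnx
  simp only [Finset.mem_Icc] at hx hnx
  exact dterm_zero (by omega)

lemma sum_tele (m : ℕ) (f : ℤ → ℚ) :
    ∑ k ∈ Finset.Icc (-(m:ℤ)) (m:ℤ), (f (k+1) - f k) = f ((m:ℤ)+1) - f (-(m:ℤ)) := by
  have himg : Finset.Icc (-(m:ℤ)) (m:ℤ)
      = (Finset.range (2*m+1)).image (fun i : ℕ => (i:ℤ) - m) := by
    ext x
    simp only [Finset.mem_Icc, Finset.mem_image, Finset.mem_range]
    constructor
    · intro hx
      exact ⟨(x + m).toNat, by omega, by omega⟩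
    · rintro ⟨i, hi, rfl⟩
      omega
  rw [himg, Finset.sum_image (by intro x _ y _ hxy; simp only at hxy; omega)]
  have hc : ∀ i : ℕ, f ((i:ℤ) - m + 1) = f (((i+1 : ℕ):ℤ) - m) := by
    intro i; congr 1; push_cast; ring
  simp only [hc]
  rw [Finset.sum_range_sub (fun i : ℕ => f ((i:ℤ) - m))]
  congr 1
  · congr 1; push_cast; ring
  · congr 1; push_cast; ring

lemma gcert_zero_lo (a b n : ℕ) : gcert a b n (-((n:ℕ):ℤ) - 1) = 0 := by
  rw [gcert, ibin_neg (show (n:ℤ) + (-(n:ℤ) - 1) < 0 by omega)]; ring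

lemma gcert_zero_hi (a b n : ℕ) : gcert a b n ((n:ℤ) + 2) = 0 := by
  rw [gcert, ibin_big (show ((b+n : ℕ) : ℤ) < (b:ℤ) + ((n:ℤ)+2) - 1 by push_cast; omega)]; ring

lemma dixon_rec (a b n : ℕ) :
    ((n:ℚ)+1) * ∑ k ∈ Finset.Icc (-((n+1:ℕ):ℤ)) ((n+1:ℕ):ℤ), dterm a b (n+1) k
      = ((a:ℚ)+b+n+1) * ∑ k ∈ Finset.Icc (-((n:ℕ):ℤ)) ((n:ℕ):ℤ), dterm a b n k := by
  rw [← sum_ext a b n (n+1) (Nat.le_succ n)]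
  rw [Finset.mul_sum, Finset.mul_sum, ← sub_eq_zero, ← Finset.sum_sub_distrib]
  have : ∀ k ∈ Finset.Icc (-((n+1:ℕ):ℤ)) ((n+1:ℕ):ℤ),
      ((n:ℚ)+1) * dterm a b (n+1) k - ((a:ℚ)+b+n+1) * dterm a b n k
        = gcert a b n (k+1) - gcert a b n k := fun k _ => dixon_step a b n k
  rw [Finset.sum_congr rfl this, sum_tele (n+1) (gcert a b n)]
  have h1 : (((n+1:ℕ):ℤ)+1) = (n:ℤ) + 2 := by push_cast; ring
  have h2 : (-((n+1:ℕ):ℤ)) = -((n:ℕ):ℤ) - 1 := by push_cast; ring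
  rw [h1, h2, gcert_zero_hi, gcert_zero_lo, sub_zero]

theorem dixon_identity (a b n : ℕ) :
    ∑ k ∈ Finset.Icc (-(n : ℤ)) (n : ℤ),
      (-1 : ℚ) ^ k * ibin (a + b) ((a : ℤ) + k) * ibin (a + n) ((n : ℤ) + k)
        * ibin (b + n) ((b : ℤ) + k)
      = ((a + b + n).factorial : ℚ) / ((a.factorial : ℚ) * b.factorial * n.factorial) := by
  induction n with
  | zero =>
    show ∑ k ∈ Finset.Icc (-(0:ℤ)) (0:ℤ), dterm a b 0 k = _
    rw [show (-(0:ℤ)) = 0 from by norm_num, Finset.Icc_self, Finset.sum_singleton]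
    rw [dterm]
    rw [show ((a:ℤ) + 0) = ((a:ℕ):ℤ) from by ring,
        show ((0:ℕ):ℤ) + 0 = ((0:ℕ):ℤ) from by norm_num,
        show ((b:ℤ) + 0) = ((b:ℕ):ℤ) from by ring]
    rw [ibin, if_pos (by positivity), Int.toNat_natCast,
        ibin, if_pos (by positivity), Int.toNat_natCast,
        ibin, if_pos (by positivity), Int.toNat_natCast]
    simp only [Nat.add_zero, Nat.choose_zero_right, Nat.choose_self]
    have hcast := Nat.cast_choose ℚ (show a ≤ a + b from Nat.le_add_right a b)
    rw [show a + b - a = b from by omega] at hcast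
    rw [hcast]
    simp [Nat.factorial]
  | succ n ih =>
    have hrec := dixon_rec a b n
    have hS : (∑ k ∈ Finset.Icc (-(n : ℤ)) (n : ℤ), dterm a b n k)
        = ((a + b + n).factorial : ℚ) / ((a.factorial : ℚ) * b.factorial * n.factorial) := ih
    show ∑ k ∈ Finset.Icc (-((n+1:ℕ):ℤ)) ((n+1:ℕ):ℤ), dterm a b (n+1) k = _
    have hne : ((n:ℚ)+1) ≠ 0 := by positivity
    have hfa : (a.factorial : ℚ) ≠ 0 := by exact_mod_cast a.factorial_ne_zero
    have hfb : (b.factorial : ℚ) ≠ 0 := by exact_mod_cast b.factorial_ne_zero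
    have hfn : (n.factorial : ℚ) ≠ 0 := by exact_mod_cast n.factorial_ne_zero
    rw [hS] at hrec
    have hfac1 : ((a + b + (n+1)).factorial : ℚ)
        = ((a:ℚ)+b+n+1) * ((a + b + n).factorial : ℚ) := by
      rw [show a + b + (n+1) = (a+b+n) + 1 from by omega, Nat.factorial_succ]
      push_cast; ring
    have hfac2 : (((n+1:ℕ)).factorial : ℚ) = ((n:ℚ)+1) * (n.factorial : ℚ) := by
      rw [Nat.factorial_succ]; push_cast; ring
    have := hrec
    field_simp [hfac1, hfac2] at this ⊢
    rw [hfac1, hfac2]; linear_combination this
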